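/- For each λ ∈ ℝ and each continuous g : [0,T] → ℂ, there exists a unique C¹ function θ : [0,T] → ℂ with θ(0) = 0 satisfying θ'(t) + ∫ₜ^T e^{−iλ(s−t)}(θ(s) − iλ θ'(s)) ds = g(t) for all t ∈ [0,T]. -/

import Mathlib

open intervalIntegral Set

/-! Put `r = iλ` and let `Φ(t) = ∫ₜᵀ e^{-r(s-t)} (θ - r θ')(s) ds` be the memory term. Since
`Φ' = r Φ - θ + r θ'`, a `C¹` solution `θ` of the equation on `[0, T]` is exactly the first
component of a solution of the two-point boundary value problem
`θ' = g - Φ`, `Φ' = r g - θ`, `θ(0) = 0`, `Φ(T) = 0`.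
In the variables `θ ± Φ` this system decouples into `p' = -p + (1 + r) g` and
`q' = q + (1 - r) g`, which are solved by variation of constants; the boundary conditions fix
the remaining free constant because `e^T + e^{-T} ≠ 0`, and the same fact forces the
homogeneous problem to have only the trivial solution. -/

noncomputable def volterraTerm (r : ℂ) (T : ℝ) (u : ℝ → ℂ) (t : ℝ) : ℂ :=
  ∫ s in t..T, Complex.exp (-(r * ((s : ℂ) - (t : ℂ)))) * u s

noncomputable def duhamel (a c : ℂ) (h : ℝ → ℂ) (t : ℝ) : ℂ :=
  Complex.exp (a * t) * (c + ∫ s in 0..t, Complex.exp (-a * s) * h s)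

lemma hasDerivAt_cexp_mul_ofReal (r : ℂ) (t : ℝ) :
    HasDerivAt (fun s : ℝ => Complex.exp (r * s)) (r * Complex.exp (r * t)) t := by
  simpa [mul_comm] using ((hasDerivAt_id (t : ℂ)).const_mul r).cexp.comp_ofReal

lemma cexp_mul_ofReal_mul_cexp_neg_mul (r : ℂ) (t : ℝ) :
    Complex.exp (r * t) * Complex.exp (-r * t) = 1 := by
  rw [← Complex.exp_add, ← add_mul, add_neg_cancel, zero_mul, Complex.exp_zero]

lemma cexp_add_cexp_neg_ne_zero (T : ℝ) : Complex.exp T + Complex.exp (-T) ≠ 0 := by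
  rw [← Complex.two_cosh, ← Complex.ofReal_cosh]
  exact mul_ne_zero two_ne_zero (Complex.ofReal_ne_zero.2 (Real.cosh_pos T).ne')

section volterraTerm

variable {r : ℂ} {T : ℝ} {u : ℝ → ℂ}

lemma volterraTerm_self : volterraTerm r T u T = 0 :=
  integral_same

lemma volterraTerm_eq_cexp_mul (t : ℝ) :
    volterraTerm r T u t = Complex.exp (r * t) * ∫ s in t..T, Complex.exp (-r * s) * u s := by
  rw [volterraTerm, ← integral_const_mul]
  refine integral_congr fun s _ => ?_
  simp only [← mul_assoc, ← Complex.exp_add]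
  ring_nf

lemma hasDerivAt_volterraTerm (hu : Continuous u) (t : ℝ) :
    HasDerivAt (volterraTerm r T u) (r * volterraTerm r T u t - u t) t := by
  have hint : Continuous fun s : ℝ => Complex.exp (-r * s) * u s := by fun_prop
  have hprod := (hasDerivAt_cexp_mul_ofReal r t).mul
    (integral_hasDerivAt_left (hint.intervalIntegrable t T)
      (hint.stronglyMeasurableAtFilter _ _) hint.continuousAt)
  rw [show volterraTerm r T u = _ from funext volterraTerm_eq_cexp_mul]
  refine hprod.congr_deriv ?_
  linear_combination -u t * cexp_mul_ofReal_mul_cexp_neg_mul r t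

end volterraTerm

lemma duhamel_zero (a c : ℂ) (h : ℝ → ℂ) : duhamel a c h 0 = c := by
  simp [duhamel]

lemma duhamel_eq_cexp_mul_add (a c : ℂ) (h : ℝ → ℂ) (t : ℝ) :
    duhamel a c h t = Complex.exp (a * t) * c + duhamel a 0 h t := by
  simp only [duhamel]
  ring

lemma hasDerivAt_duhamel (a c : ℂ) {h : ℝ → ℂ} (hh : Continuous h) (t : ℝ) :
    HasDerivAt (duhamel a c h) (a * duhamel a c h t + h t) t := by
  have hint : Continuous fun s : ℝ => Complex.exp (-a * s) * h s := by fun_prop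
  refine ((hasDerivAt_cexp_mul_ofReal a t).mul
    ((hint.integral_hasStrictDerivAt 0 t).hasDerivAt.const_add c)).congr_deriv ?_
  rw [duhamel]
  linear_combination h t * cexp_mul_ofReal_mul_cexp_neg_mul a t

section LinearODE

variable {r : ℂ} {a b : ℝ} {f : ℝ → ℂ}

lemma cexp_neg_mul_mul_eq_of_hasDerivAt (hf : ∀ x ∈ Icc a b, HasDerivAt f (r * f x) x)
    {x : ℝ} (hx : x ∈ Icc a b) :
    Complex.exp (-r * x) * f x = Complex.exp (-r * a) * f a := by
  have hderiv : ∀ y ∈ Icc a b,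
      HasDerivAt (fun y : ℝ => Complex.exp (-r * y) * f y) 0 y := fun y hy =>
    ((hasDerivAt_cexp_mul_ofReal (-r) y).mul (hf y hy)).congr_deriv (by ring)
  exact constant_of_has_deriv_right_zero
    (fun y hy => (hderiv y hy).continuousAt.continuousWithinAt)
    (fun y hy => (hderiv y (Ico_subset_Icc_self hy)).hasDerivWithinAt) x hx

lemma eq_zero_of_hasDerivAt_of_eq_zero (hf : ∀ x ∈ Icc a b, HasDerivAt f (r * f x) x)
    {y : ℝ} (hy : y ∈ Icc a b) (hfy : f y = 0) {x : ℝ} (hx : x ∈ Icc a b) : f x = 0 := by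
  have h := (cexp_neg_mul_mul_eq_of_hasDerivAt hf hx).trans
    (cexp_neg_mul_mul_eq_of_hasDerivAt hf hy).symm
  rw [hfy, mul_zero] at h
  exact (mul_eq_zero.1 h).resolve_left (Complex.exp_ne_zero _)

end LinearODE

lemma eq_zero_of_hasDerivAt_neg_swap {δ ψ : ℝ → ℂ} {T t : ℝ}
    (hδ : ∀ x ∈ Icc 0 T, HasDerivAt δ (-ψ x) x) (hψ : ∀ x ∈ Icc 0 T, HasDerivAt ψ (-δ x) x)
    (hδ0 : δ 0 = 0) (hψT : ψ T = 0) (ht : t ∈ Icc 0 T) : δ t = 0 := by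
  have h0 : (0 : ℝ) ∈ Icc 0 T := ⟨le_rfl, ht.1.trans ht.2⟩
  have hT : T ∈ Icc 0 T := ⟨ht.1.trans ht.2, le_rfl⟩
  have hsum : ∀ x ∈ Icc 0 T, HasDerivAt (fun x => δ x + ψ x) (-1 * (δ x + ψ x)) x :=
    fun x hx => ((hδ x hx).add (hψ x hx)).congr_deriv (by ring)
  have hdiff : ∀ x ∈ Icc 0 T, HasDerivAt (fun x => δ x - ψ x) (1 * (δ x - ψ x)) x :=
    fun x hx => ((hδ x hx).sub (hψ x hx)).congr_deriv (by ring)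
  have hsumT := cexp_neg_mul_mul_eq_of_hasDerivAt hsum hT
  have hdiffT := cexp_neg_mul_mul_eq_of_hasDerivAt hdiff hT
  simp only [hδ0, hψT, neg_neg, one_mul, neg_mul, add_zero, sub_zero, zero_add, zero_sub,
    Complex.ofReal_zero, mul_zero, Complex.exp_zero] at hsumT hdiffT
  have hδT : δ T = 0 := by
    have hcosh : (Complex.exp T + Complex.exp (-T)) * δ T = 0 := by
      linear_combination hsumT + hdiffT
    exact (mul_eq_zero.1 hcosh).resolve_left (cexp_add_cexp_neg_ne_zero T)
  have hψ0 : ψ 0 = 0 := by rw [← hsumT, hδT, mul_zero]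
  have hsum_t := eq_zero_of_hasDerivAt_of_eq_zero hsum h0 (by simp [hδ0, hψ0]) ht
  have hdiff_t := eq_zero_of_hasDerivAt_of_eq_zero hdiff h0 (by simp [hδ0, hψ0]) ht
  linear_combination (hsum_t + hdiff_t) / 2

section System

variable {r : ℂ} {T : ℝ} {G θ Φ : ℝ → ℂ}

lemma exists_hasDerivAt_system (r : ℂ) (hG : Continuous G) (T : ℝ) :
    ∃ θ Φ : ℝ → ℂ, (∀ t, HasDerivAt θ (G t - Φ t) t) ∧
      (∀ t, HasDerivAt Φ (r * G t - θ t) t) ∧ θ 0 = 0 ∧ Φ T = 0 := by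
  have hGp : Continuous fun s => (1 + r) * G s := by fun_prop
  have hGq : Continuous fun s => (1 - r) * G s := by fun_prop
  set c : ℂ := (duhamel 1 0 (fun s => (1 - r) * G s) T
    - duhamel (-1) 0 (fun s => (1 + r) * G s) T) / (Complex.exp T + Complex.exp (-T))
  set p := duhamel (-1) c fun s => (1 + r) * G s
  set q := duhamel 1 (-c) fun s => (1 - r) * G s
  have hpq : p T = q T := by
    simp only [p, q, duhamel_eq_cexp_mul_add (c := c), duhamel_eq_cexp_mul_add (c := -c), c]
    field_simp [cexp_add_cexp_neg_ne_zero T]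
    ring
  refine ⟨fun t => (p t + q t) / 2, fun t => (p t - q t) / 2, fun t => ?_, fun t => ?_, ?_, ?_⟩
  · exact ((hasDerivAt_duhamel _ _ hGp t).add (hasDerivAt_duhamel _ _ hGq t)).div_const 2
      |>.congr_deriv (by ring)
  · exact ((hasDerivAt_duhamel _ _ hGp t).sub (hasDerivAt_duhamel _ _ hGq t)).div_const 2
      |>.congr_deriv (by ring)
  · simp [p, q, duhamel_zero]
  · simp [hpq]

lemma volterraTerm_eq_of_hasDerivAt_system (hG : Continuous G)
    (hθ : ∀ t, HasDerivAt θ (G t - Φ t) t) (hΦ : ∀ t, HasDerivAt Φ (r * G t - θ t) t)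
    (hΦT : Φ T = 0) {t : ℝ} (ht : t ∈ Icc 0 T) :
    volterraTerm r T (fun s => θ s - r * deriv θ s) t = Φ t := by
  have hu : (fun s => θ s - r * deriv θ s) = fun s => θ s - r * (G s - Φ s) :=
    funext fun s => by rw [(hθ s).deriv]
  have hθc : Continuous θ := continuous_iff_continuousAt.2 fun s => (hθ s).continuousAt
  have hΦc : Continuous Φ := continuous_iff_continuousAt.2 fun s => (hΦ s).continuousAt
  -- `Φ` and the memory term solve the same equation `y' = r y - u` with `y T = 0`
  have hdiff : ∀ x ∈ Icc 0 T, HasDerivAt (fun x => volterraTerm r T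
      (fun s => θ s - r * (G s - Φ s)) x - Φ x) (r * (volterraTerm r T
      (fun s => θ s - r * (G s - Φ s)) x - Φ x)) x := fun x _ =>
    ((hasDerivAt_volterraTerm (by fun_prop) x).sub (hΦ x)).congr_deriv (by ring)
  rw [hu, ← sub_eq_zero]
  exact eq_zero_of_hasDerivAt_of_eq_zero hdiff ⟨ht.1.trans ht.2, le_rfl⟩
    (by rw [volterraTerm_self, hΦT, sub_zero]) ht

lemma hasDerivAt_system_of_volterra_eq (hθ : ContDiff ℝ 1 θ)
    (hsol : ∀ t ∈ Icc 0 T,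
      deriv θ t + volterraTerm r T (fun s => θ s - r * deriv θ s) t = G t)
    {t : ℝ} (ht : t ∈ Icc 0 T) :
    HasDerivAt θ (G t - volterraTerm r T (fun s => θ s - r * deriv θ s) t) t ∧
      HasDerivAt (volterraTerm r T (fun s => θ s - r * deriv θ s))
        (r * G t - θ t) t := by
  obtain ⟨hθd, hθ'c⟩ := contDiff_one_iff_deriv.1 hθ
  have hθ' : deriv θ t = G t - volterraTerm r T (fun s => θ s - r * deriv θ s) t :=
    eq_sub_of_add_eq (hsol t ht)
  refine ⟨hθ' ▸ (hθd t).hasDerivAt, ?_⟩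
  exact (hasDerivAt_volterraTerm (by fun_prop) t).congr_deriv (by rw [hθ']; ring)

lemma eq_of_hasDerivAt_system {θ₁ Φ₁ : ℝ → ℂ}
    (h₁ : ∀ x ∈ Icc 0 T, HasDerivAt θ₁ (G x - Φ₁ x) x ∧ HasDerivAt Φ₁ (r * G x - θ₁ x) x)
    (h : ∀ x ∈ Icc 0 T, HasDerivAt θ (G x - Φ x) x ∧ HasDerivAt Φ (r * G x - θ x) x)
    (hθ0 : θ₁ 0 = θ 0) (hΦT : Φ₁ T = Φ T) {t : ℝ} (ht : t ∈ Icc 0 T) : θ₁ t = θ t :=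
  sub_eq_zero.1 <| eq_zero_of_hasDerivAt_neg_swap (δ := fun x => θ₁ x - θ x)
    (ψ := fun x => Φ₁ x - Φ x)
    (fun x hx => ((h₁ x hx).1.sub (h x hx).1).congr_deriv (by ring))
    (fun x hx => ((h₁ x hx).2.sub (h x hx).2).congr_deriv (by ring))
    (sub_eq_zero.2 hθ0) (sub_eq_zero.2 hΦT) ht

end System

theorem stmt_11_general (T lam : ℝ) (g : ℝ → ℂ) (hg : ContinuousOn g (Icc 0 T)) :
    ∃ θ : ℝ → ℂ, ContDiff ℝ 1 θ ∧ θ 0 = 0 ∧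
      (∀ t ∈ Icc 0 T,
        deriv θ t + (∫ s in t..T, Complex.exp (-(Complex.I * (lam : ℂ) * ((s : ℂ) - (t : ℂ)))) *
          (θ s - Complex.I * (lam : ℂ) * deriv θ s)) = g t) ∧
      ∀ θ₂ : ℝ → ℂ, ContDiff ℝ 1 θ₂ → θ₂ 0 = 0 →
        (∀ t ∈ Icc 0 T,
          deriv θ₂ t + (∫ s in t..T, Complex.exp (-(Complex.I * (lam : ℂ) * ((s : ℂ) - (t : ℂ)))) *
            (θ₂ s - Complex.I * (lam : ℂ) * deriv θ₂ s)) = g t) →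
        ∀ t ∈ Icc 0 T, θ₂ t = θ t := by
  obtain ⟨G, hGg⟩ := ContinuousMap.exists_restrict_eq isClosed_Icc ⟨_, hg.domRestrict⟩
  have hG : ∀ t ∈ Icc 0 T, G t = g t := fun t ht => DFunLike.congr_fun hGg ⟨t, ht⟩
  obtain ⟨θ, Φ, hθ, hΦ, hθ0, hΦT⟩ := exists_hasDerivAt_system (Complex.I * lam) G.continuous T
  have hθC1 : ContDiff ℝ 1 θ := contDiff_one_iff_deriv.2 ⟨fun t => (hθ t).differentiableAt,
    by rw [show deriv θ = fun t => G t - Φ t from funext fun t => (hθ t).deriv]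
       exact G.continuous.sub (continuous_iff_continuousAt.2 fun t => (hΦ t).continuousAt)⟩
  refine ⟨θ, hθC1, hθ0, fun t ht => ?_, fun θ₂ hθ₂ hθ₂0 hsol t ht => ?_⟩
  · change deriv θ t + volterraTerm _ T (fun s => θ s - _ * deriv θ s) t = g t
    rw [volterraTerm_eq_of_hasDerivAt_system G.continuous hθ hΦ hΦT ht, (hθ t).deriv, ← hG t ht,
      sub_add_cancel]
  · exact eq_of_hasDerivAt_system
      (fun x hx => hasDerivAt_system_of_volterra_eq hθ₂
        (fun y hy => (hsol y hy).trans (hG y hy).symm) hx)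
      (fun x _ => ⟨hθ x, hΦ x⟩) (hθ₂0.trans hθ0.symm) (volterraTerm_self.trans hΦT.symm) ht

theorem stmt_11 (T lam : ℝ) (hT : 0 ≤ T) (g : ℝ → ℂ) (hg : ContinuousOn g (Icc 0 T)) :
    ∃ θ : ℝ → ℂ, ContDiff ℝ 1 θ ∧ θ 0 = 0 ∧
      (∀ t ∈ Icc 0 T,
        deriv θ t + (∫ s in t..T, Complex.exp (-(Complex.I * (lam : ℂ) * ((s : ℂ) - (t : ℂ)))) *
          (θ s - Complex.I * (lam : ℂ) * deriv θ s)) = g t) ∧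
      ∀ θ₂ : ℝ → ℂ, ContDiff ℝ 1 θ₂ → θ₂ 0 = 0 →
        (∀ t ∈ Icc 0 T,
          deriv θ₂ t + (∫ s in t..T, Complex.exp (-(Complex.I * (lam : ℂ) * ((s : ℂ) - (t : ℂ)))) *
            (θ₂ s - Complex.I * (lam : ℂ) * deriv θ₂ s)) = g t) →
        ∀ t ∈ Icc 0 T, θ₂ t = θ t :=
  stmt_11_general T lam g hg
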